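/- Let (N_{r,t})_{r≤t} be a skew convolution semigroup associated with (Q_{r,t}) and let G_t(f,·) be the Radon measure on (−∞,t] induced by the non-increasing function r ↦ J_{r,t}(f). Then: (i) if f, g ∈ B(E)^+ and 0 ≤ g ≤ cf pointwise for a constant c ≥ 1, then G_t(g,A) ≤ c·G_t(f,A) for every Borel set A ⊆ (−∞,t]; (ii) for t ≤ u and f ∈ B(E)^+, G_u(f,A) = G_t(V_{t,u}f,A) for every Borel set A ⊆ (−∞,t); (iii) for t ≤ u and f ∈ B(E)^+, the restriction of G_u(f,·) to (−∞,t) is absolutely continuous with respect to the restriction of G_t(1,·) to (−∞,t). -/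

import Mathlib

open MeasureTheory ProbabilityTheory Filter Topology

noncomputable section

variable {E : Type*} [TopologicalSpace E] [MeasurableSpace E] [BorelSpace E]
  [StandardBorelSpace E]

/-- The Borel σ-algebra of the topology of weak convergence on `M(E)`. -/
instance : MeasurableSpace (FiniteMeasure E) := borel _

/-- `B(E)^+`: bounded non-negative Borel functions on `E`. -/
def Bp (f : E → ℝ) : Prop :=
  Measurable f ∧ (∀ x, 0 ≤ f x) ∧ ∃ C, ∀ x, f x ≤ C

/-- The Laplace functional `L_F(f) = ∫_{M(E)} e^{-ν(f)} F(dν)`. -/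
def lap (F : Measure (FiniteMeasure E)) (f : E → ℝ) : ℝ :=
  ∫ ν, Real.exp (- ∫ x, f x ∂(ν : Measure E)) ∂F

/-- Convolution of two measures on `M(E)`: the image of `F ⊗ G` under `(μ, ν) ↦ μ + ν`. -/
def conv (F G : Measure (FiniteMeasure E)) : Measure (FiniteMeasure E) :=
  (F.prod G).map (fun p => p.1 + p.2)

/-- The functional `J_{r,t}(f) = -log L_{N_{r,t}}(f)`. -/
def Jfun (N : ℝ → ℝ → Measure (FiniteMeasure E)) (r t : ℝ) (f : E → ℝ) : ℝ :=
  - Real.log (lap (N r t) f)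

/-!
The skew convolution identity `N_{u,t} = (N_{u,v} Q_{v,t}) * N_{v,t}` makes Laplace functionals
multiply, so that `J_{u,t}(f) = J_{u,v}(V_{v,t} f) + J_{v,t}(f)` for `u ≤ v ≤ t`. Thus
`r ↦ J_{r,t}(f)` is non-increasing and its increments are again values of `J`. If `g ≤ c f` with
`c ≥ 1`, Jensen's inequality for `x ↦ x ^ c` gives `J(g) ≤ c J(f)` and `V g ≤ c V f`, so the
increments of `J(g)` are at most `c` times those of `J(f)`. Passing to right limits, `G_t(g, ·)`
is dominated by `c G_t(f, ·)` on the intervals `(a, b]`, `b < t`, and on the atom `{t}`, hence on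
all Borel subsets of `(-∞, t]`, because the difference of the two distribution functions is a
Stieltjes function. For `r < t ≤ u` the same identity shows that `J_{r,u}(f) - J_{r,t}(V_{t,u} f)`
does not depend on `r`, which gives (ii); (iii) follows from (i) applied to
`V_{t,u} f ≤ (sup V_{t,u} f) · 1` together with (ii).
-/

open Set

namespace MeasureTheory.Measure

lemma continuousWithinAt_measureReal_Iic (μ : Measure ℝ) [IsFiniteMeasure μ] (x : ℝ) :
    ContinuousWithinAt (fun y => μ.real (Iic y)) (Ici x) x := by
  have hInter : ⋂ r > x, Iic r = Iic x := by
    ext y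
    simpa only [mem_iInter, mem_Iic] using
      ⟨le_of_forall_gt_imp_ge_of_dense, fun h r hr => h.trans hr.le⟩
  have h := tendsto_measure_biInter_gt (μ := μ) (s := Iic) (a := x)
    (fun r _ => measurableSet_Iic.nullMeasurableSet) (fun _ _ _ hij => Iic_subset_Iic.2 hij)
    ⟨x + 1, by linarith, measure_ne_top μ _⟩
  rw [hInter] at h
  rw [← continuousWithinAt_Ioi_iff_Ici]
  exact (ENNReal.tendsto_toReal (measure_ne_top μ _)).comp h

lemma measureReal_Iic_add_measureReal_Ioc (μ : Measure ℝ) [IsFiniteMeasure μ] {a b : ℝ}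
    (hab : a ≤ b) : μ.real (Iic a) + μ.real (Ioc a b) = μ.real (Iic b) := by
  rw [← measureReal_union (Iic_disjoint_Ioc le_rfl) measurableSet_Ioc, Iic_union_Ioc_eq_Iic hab]

lemma le_of_forall_Ioc_le {μ ν : Measure ℝ} [IsFiniteMeasure μ] [IsFiniteMeasure ν]
    (h : ∀ a b, a ≤ b → μ (Ioc a b) ≤ ν (Ioc a b)) : μ ≤ ν := by
  set D : ℝ → ℝ := fun x => ν.real (Iic x) - μ.real (Iic x)
  have hD : ∀ a b, a ≤ b → D b - D a = ν.real (Ioc a b) - μ.real (Ioc a b) := fun a b hab => by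
    simp only [D, ← ν.measureReal_Iic_add_measureReal_Ioc hab,
      ← μ.measureReal_Iic_add_measureReal_Ioc hab]
    ring
  have hDmono : Monotone D := fun a b hab => by
    have : μ.real (Ioc a b) ≤ ν.real (Ioc a b) :=
      ENNReal.toReal_mono (measure_ne_top ν _) (h a b hab)
    linarith [hD a b hab]
  let F : StieltjesFunction ℝ := ⟨D, hDmono, fun x =>
    (ν.continuousWithinAt_measureReal_Iic x).sub (μ.continuousWithinAt_measureReal_Iic x)⟩
  have hF : ν = μ + F.measure := ext_of_Ioc _ _ fun a b hab => by
    rw [add_apply, F.measure_Ioc, show F b - F a = D b - D a from rfl, hD a b hab.le,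
      ENNReal.ofReal_sub _ measureReal_nonneg, ofReal_measureReal, ofReal_measureReal,
      add_tsub_cancel_of_le (h a b hab.le)]
  exact hF ▸ Measure.le_add_right le_rfl

lemma restrict_Iio_le_of_forall_Ioc_le {μ ν : Measure ℝ} [IsLocallyFiniteMeasure μ]
    [IsLocallyFiniteMeasure ν] {t : ℝ} (h : ∀ a b, a ≤ b → b < t → μ (Ioc a b) ≤ ν (Ioc a b)) :
    μ.restrict (Iio t) ≤ ν.restrict (Iio t) := by
  obtain ⟨u, hu_mono, hu_lt, hu_lim⟩ := exists_seq_strictMono_tendsto t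
  set W : ℕ → Set ℝ := fun n => Ioc (-n) (u n)
  have hW_mono : Monotone W := fun m n hmn =>
    Ioc_subset_Ioc (neg_le_neg (Nat.cast_le.2 hmn)) (hu_mono.monotone hmn)
  have hW_iUnion : ⋃ n, W n = Iio t := by
    refine Subset.antisymm (iUnion_subset fun n x hx => hx.2.trans_lt (hu_lt n)) fun x hx => ?_
    obtain ⟨n, hn⟩ := ((hu_lim.eventually (lt_mem_nhds hx)).and
      (tendsto_natCast_atTop_atTop.eventually (eventually_gt_atTop (-x)))).exists
    exact mem_iUnion.2 ⟨n, by linarith [hn.2], hn.1.le⟩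
  have hW_le : ∀ n, μ.restrict (W n) ≤ ν.restrict (W n) := fun n => by
    have : IsFiniteMeasure (μ.restrict (W n)) :=
      isFiniteMeasure_restrict.2 measure_Ioc_lt_top.ne
    have : IsFiniteMeasure (ν.restrict (W n)) :=
      isFiniteMeasure_restrict.2 measure_Ioc_lt_top.ne
    refine le_of_forall_Ioc_le fun a b _ => ?_
    rw [restrict_apply measurableSet_Ioc, restrict_apply measurableSet_Ioc, Ioc_inter_Ioc]
    rcases le_or_gt (a ⊔ -n) (b ⊓ u n) with hab | hab
    · exact h _ _ hab (inf_le_right.trans_lt (hu_lt n))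
    · simp [Ioc_eq_empty_of_le hab.le]
  refine Measure.le_iff.2 fun s hs => ?_
  rw [← hW_iUnion, restrict_iUnion_apply_eq_iSup hW_mono.directed_le hs,
    restrict_iUnion_apply_eq_iSup hW_mono.directed_le hs]
  exact iSup_mono fun n => hW_le n s

lemma restrict_Iio_eq_of_forall_Ioc_eq {μ ν : Measure ℝ} [IsLocallyFiniteMeasure μ]
    [IsLocallyFiniteMeasure ν] {t : ℝ} (h : ∀ a b, a ≤ b → b < t → μ (Ioc a b) = ν (Ioc a b)) :
    μ.restrict (Iio t) = ν.restrict (Iio t) :=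
  le_antisymm (restrict_Iio_le_of_forall_Ioc_le fun a b hab hbt => (h a b hab hbt).le)
    (restrict_Iio_le_of_forall_Ioc_le fun a b hab hbt => (h a b hab hbt).ge)

lemma restrict_Iic_le_of_forall_Ioc_le {μ ν : Measure ℝ} [IsLocallyFiniteMeasure μ]
    [IsLocallyFiniteMeasure ν] {t : ℝ} (h : ∀ a b, a ≤ b → b < t → μ (Ioc a b) ≤ ν (Ioc a b))
    (ht : μ {t} ≤ ν {t}) : μ.restrict (Iic t) ≤ ν.restrict (Iic t) := by
  have hdisj : Disjoint (Iio t) {t} := disjoint_singleton_right.2 (lt_irrefl t)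
  rw [← Iio_union_right, restrict_union hdisj (measurableSet_singleton t),
    restrict_union hdisj (measurableSet_singleton t), restrict_singleton, restrict_singleton]
  exact add_le_add (restrict_Iio_le_of_forall_Ioc_le h) (by gcongr)

end MeasureTheory.Measure

section RightSupremum

variable {φ ψ : ℝ → ℝ} {a b c r t u : ℝ}

lemma AntitoneOn.bddAbove_range_Ioc (hφ : AntitoneOn φ (Iic t)) (r : ℝ) :
    BddAbove (range fun w : Ioc r t => φ w) :=
  ⟨φ r, forall_mem_range.2 fun w => hφ (w.2.1.le.trans w.2.2) w.2.2 w.2.1.le⟩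

lemma AntitoneOn.ciSup_Ioc_le_ciSup_Ioc (hφ : AntitoneOn φ (Iic t)) (hab : a ≤ b) (hbt : b < t) :
    ⨆ w : Ioc b t, φ w ≤ ⨆ w : Ioc a t, φ w :=
  have := nonempty_Ioc_subtype hbt
  ciSup_le fun w => le_ciSup (hφ.bddAbove_range_Ioc a) ⟨w, hab.trans_lt w.2.1, w.2.2⟩

lemma AntitoneOn.ciSup_Ioc_eq (hφ : AntitoneOn φ (Iic u)) (hrt : r < t) (htu : t ≤ u) :
    ⨆ w : Ioc r u, φ w = ⨆ w : Ioc r t, φ w := by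
  have hφt : AntitoneOn φ (Iic t) := hφ.mono (Iic_subset_Iic.2 htu)
  have := nonempty_Ioc_subtype hrt
  have := nonempty_Ioc_subtype (hrt.trans_le htu)
  refine le_antisymm (ciSup_le fun w => ?_)
    (ciSup_le fun w => le_ciSup (hφ.bddAbove_range_Ioc r) ⟨w, w.2.1, w.2.2.trans htu⟩)
  rcases le_or_gt (w : ℝ) t with hwt | htw
  · exact le_ciSup (hφt.bddAbove_range_Ioc r) ⟨w, w.2.1, hwt⟩
  · exact (hφ htu w.2.2 htw.le).trans (le_ciSup (hφt.bddAbove_range_Ioc r) ⟨t, hrt, le_rfl⟩)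

/-- For `φ` antitone, `⨆ w : Ioc r t, φ w` is the right limit `φ (r+)`; domination of increments
passes to these limits. -/
lemma ciSup_Ioc_sub_le_mul (hφ : AntitoneOn φ (Iic t)) (hψ : AntitoneOn ψ (Iic t)) (hc : 0 ≤ c)
    (h : ∀ u v, u ≤ v → v ≤ t → φ u - φ v ≤ c * (ψ u - ψ v)) (hab : a ≤ b) (hbt : b < t) :
    (⨆ w : Ioc a t, φ w) - ⨆ w : Ioc b t, φ w
      ≤ c * ((⨆ w : Ioc a t, ψ w) - ⨆ w : Ioc b t, ψ w) := by
  have := nonempty_Ioc_subtype hbt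
  have hψab := hψ.ciSup_Ioc_le_ciSup_Ioc hab hbt
  suffices hw : ∀ w : Ioc a t,
      φ w ≤ (⨆ w : Ioc b t, φ w) + c * ((⨆ w : Ioc a t, ψ w) - ⨆ w : Ioc b t, ψ w) by
    have := nonempty_Ioc_subtype (hab.trans_lt hbt)
    linarith [ciSup_le hw]
  intro w
  rcases le_or_gt (w : ℝ) b with hwb | hbw
  · have hv : ∀ v : Ioc b t, c * ψ v ≤ c * (⨆ w : Ioc a t, ψ w) - φ w + ⨆ w : Ioc b t, φ w :=
      fun v => by
        have := h w v (hwb.trans v.2.1.le) v.2.2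
        have := le_ciSup (hφ.bddAbove_range_Ioc b) v
        have := mul_le_mul_of_nonneg_left (le_ciSup (hψ.bddAbove_range_Ioc a) w) hc
        linarith
    have := ciSup_le hv
    rw [← Real.mul_iSup_of_nonneg hc] at this
    linarith
  · have := le_ciSup (hφ.bddAbove_range_Ioc b) ⟨w, hbw, w.2.2⟩
    linarith [mul_nonneg hc (sub_nonneg.2 hψab)]

end RightSupremum

section LaplaceIntegrand

omit [TopologicalSpace E] [BorelSpace E] [StandardBorelSpace E]

def laplaceIntegrand (f : E → ℝ) (ν : FiniteMeasure E) : ℝ :=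
  Real.exp (-∫ x, f x ∂(ν : Measure E))

lemma Bp.integrable {f : E → ℝ} (hf : Bp f) (μ : Measure E) [IsFiniteMeasure μ] :
    Integrable f μ := by
  obtain ⟨hm, hnn, C, hC⟩ := hf
  refine Integrable.of_bound hm.aestronglyMeasurable C (ae_of_all _ fun x => ?_)
  rw [Real.norm_eq_abs, abs_of_nonneg (hnn x)]
  exact hC x

lemma Bp.const_mul {f : E → ℝ} (hf : Bp f) {c : ℝ} (hc : 0 ≤ c) : Bp fun x => c * f x := by
  obtain ⟨hm, hnn, C, hC⟩ := hf
  exact ⟨hm.const_mul c, fun x => mul_nonneg hc (hnn x), c * C,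
    fun x => mul_le_mul_of_nonneg_left (hC x) hc⟩

lemma bp_one : Bp fun _ : E => (1 : ℝ) :=
  ⟨measurable_const, fun _ => zero_le_one, 1, fun _ => le_rfl⟩

lemma laplaceIntegrand_pos (f : E → ℝ) (ν : FiniteMeasure E) : 0 < laplaceIntegrand f ν :=
  Real.exp_pos _

lemma laplaceIntegrand_le_one {f : E → ℝ} (hf : Bp f) (ν : FiniteMeasure E) :
    laplaceIntegrand f ν ≤ 1 :=
  Real.exp_le_one_iff.2 (neg_nonpos.2 (integral_nonneg hf.2.1))

lemma laplaceIntegrand_add {f : E → ℝ} (hf : Bp f) (μ ν : FiniteMeasure E) :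
    laplaceIntegrand f (μ + ν) = laplaceIntegrand f μ * laplaceIntegrand f ν := by
  rw [laplaceIntegrand, FiniteMeasure.toMeasure_add,
    integral_add_measure (hf.integrable _) (hf.integrable _), neg_add, Real.exp_add]
  rfl

lemma laplaceIntegrand_const_mul (f : E → ℝ) (c : ℝ) (ν : FiniteMeasure E) :
    laplaceIntegrand (fun x => c * f x) ν = laplaceIntegrand f ν ^ c := by
  rw [laplaceIntegrand, laplaceIntegrand, integral_const_mul, ← Real.exp_mul]
  ring_nf

end LaplaceIntegrand

section LaplaceFunctional

omit [StandardBorelSpace E]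

lemma lap_eq_integral (F : Measure (FiniteMeasure E)) (f : E → ℝ) :
    lap F f = ∫ ν, laplaceIntegrand f ν ∂F := rfl

lemma lap_nonneg (F : Measure (FiniteMeasure E)) (f : E → ℝ) : 0 ≤ lap F f :=
  integral_nonneg fun ν => (laplaceIntegrand_pos f ν).le

lemma lap_le_one (F : Measure (FiniteMeasure E)) [IsProbabilityMeasure F] {f : E → ℝ}
    (hf : Bp f) : lap F f ≤ 1 := by
  simpa [lap_eq_integral] using
    integral_mono_of_nonneg (ae_of_all _ fun ν => (laplaceIntegrand_pos f ν).le)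
      (integrable_const (μ := F) (1 : ℝ)) (ae_of_all _ (laplaceIntegrand_le_one hf))

lemma neg_log_lap_nonneg (F : Measure (FiniteMeasure E)) [IsProbabilityMeasure F] {f : E → ℝ}
    (hf : Bp f) : 0 ≤ -Real.log (lap F f) :=
  neg_nonneg.2 (Real.log_nonpos (lap_nonneg F f) (lap_le_one F hf))

/-- A nonzero Laplace functional has an a.e.-strongly measurable integrand, since otherwise
the Bochner integral is `0`. This replaces the measurability of `ν ↦ ν(f)` on `M(E)`. -/
lemma aestronglyMeasurable_laplaceIntegrand {F : Measure (FiniteMeasure E)} {f : E → ℝ}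
    (h : lap F f ≠ 0) : AEStronglyMeasurable (laplaceIntegrand f) F := by
  by_contra hm
  exact h (integral_undef fun hi => hm hi.1)

lemma integrable_laplaceIntegrand {F : Measure (FiniteMeasure E)} [IsFiniteMeasure F]
    {f : E → ℝ} (hf : Bp f) (h : lap F f ≠ 0) : Integrable (laplaceIntegrand f) F :=
  .of_bound (aestronglyMeasurable_laplaceIntegrand h) 1 (ae_of_all _ fun ν => by
    rw [Real.norm_eq_abs, abs_of_pos (laplaceIntegrand_pos f ν)]
    exact laplaceIntegrand_le_one hf ν)

lemma lap_conv {F G : Measure (FiniteMeasure E)} [SFinite F] [SFinite G] {f : E → ℝ} (hf : Bp f)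
    (h : lap (conv F G) f ≠ 0) : lap (conv F G) f = lap F f * lap G f := by
  have hadd : AEMeasurable (fun p : FiniteMeasure E × FiniteMeasure E => p.1 + p.2)
      (F.prod G) := by
    by_contra hm
    exact h (by rw [lap, conv, Measure.map_of_not_aemeasurable hm, integral_zero_measure])
  rw [lap_eq_integral, conv, integral_map hadd (aestronglyMeasurable_laplaceIntegrand h)]
  simp_rw [laplaceIntegrand_add hf]
  exact integral_prod_mul _ _

lemma lap_bind {F : Measure (FiniteMeasure E)} [IsFiniteMeasure F]
    {κ : Kernel (FiniteMeasure E) (FiniteMeasure E)} [IsFiniteKernel κ]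
    {f g : E → ℝ} (hf : Bp f) (hκ : ∀ μ, lap (κ μ) f = Real.exp (-∫ x, g x ∂(μ : Measure E)))
    (h : lap (F.bind κ) f ≠ 0) : lap (F.bind κ) f = lap F g := by
  have hm := aestronglyMeasurable_laplaceIntegrand h
  have hi : Integrable (fun p => laplaceIntegrand f p.2) (F ⊗ₘ κ) :=
    (Measure.integrable_compProd_snd_iff hm).2 (integrable_laplaceIntegrand hf h)
  rw [lap_eq_integral, ← Measure.snd_compProd, Measure.snd,
    integral_map measurable_snd.aemeasurable (by rwa [← Measure.snd, Measure.snd_compProd]),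
    Measure.integral_compProd hi]
  exact integral_congr_ae (ae_of_all _ hκ)

lemma lap_rpow_le_lap_const_mul {F : Measure (FiniteMeasure E)} [IsProbabilityMeasure F]
    {f : E → ℝ} (hf : Bp f) {c : ℝ} (hc : 1 ≤ c) (h : lap F f ≠ 0) :
    lap F f ^ c ≤ lap F fun x => c * f x := by
  have hi := integrable_laplaceIntegrand hf h
  have hci : Integrable ((· ^ c) ∘ laplaceIntegrand f) F :=
    .of_bound (hi.1.aemeasurable.pow_const c).aestronglyMeasurable 1 (ae_of_all _ fun ν => by
      have := laplaceIntegrand_pos f ν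
      rw [Function.comp_apply, Real.norm_eq_abs, abs_of_pos (Real.rpow_pos_of_pos this c)]
      exact Real.rpow_le_one this.le (laplaceIntegrand_le_one hf ν) (by linarith))
  have := (convexOn_rpow hc).map_integral_le
    (continuousOn_id.rpow_const fun _ _ => Or.inr (zero_le_one.trans hc)) isClosed_Ici
    (ae_of_all _ fun ν => (laplaceIntegrand_pos f ν).le) hi hci
  simpa only [lap_eq_integral, laplaceIntegrand_const_mul] using this

/-- Jensen: `lap F f ^ c ≤ lap F (c f) ≤ lap F g`. -/
lemma neg_log_lap_le_mul {F : Measure (FiniteMeasure E)} [IsProbabilityMeasure F] {f g : E → ℝ}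
    (hf : Bp f) (hg : Bp g) {c : ℝ} (hc : 1 ≤ c) (hle : ∀ x, g x ≤ c * f x)
    (hf0 : 0 < lap F f) (hg0 : 0 < lap F g) :
    -Real.log (lap F g) ≤ c * -Real.log (lap F f) := by
  have hcf : lap F (fun x => c * f x) ≤ lap F g :=
    integral_mono_of_nonneg (ae_of_all _ fun ν => (laplaceIntegrand_pos _ ν).le)
      (integrable_laplaceIntegrand hg hg0.ne') (ae_of_all _ fun ν => Real.exp_le_exp.2
        (neg_le_neg (integral_mono (hg.integrable _) ((hf.const_mul (by linarith)).integrable _)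
          hle)))
  have := Real.log_le_log (Real.rpow_pos_of_pos hf0 c)
    ((lap_rpow_le_lap_const_mul hf hc hf0.ne').trans hcf)
  rw [Real.log_rpow hf0] at this
  linarith

end LaplaceFunctional

section SkewConvolution

omit [StandardBorelSpace E]

structure IsSkewConvolutionSemigroup (Q : ℝ → ℝ → Kernel (FiniteMeasure E) (FiniteMeasure E))
    (V : ℝ → ℝ → (E → ℝ) → E → ℝ) (N : ℝ → ℝ → Measure (FiniteMeasure E)) : Prop where
  isMarkovKernel : ∀ r t, r ≤ t → IsMarkovKernel (Q r t)
  bp_cumulant : ∀ r t f, r ≤ t → Bp f → Bp (V r t f)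
  lap_kernel : ∀ r t, r ≤ t → ∀ (μ : FiniteMeasure E) f, Bp f →
    lap ((Q r t) μ) f = Real.exp (- ∫ x, V r t f x ∂(μ : Measure E))
  isProbabilityMeasure : ∀ r t, r ≤ t → IsProbabilityMeasure (N r t)
  lap_pos : ∀ r t f, r ≤ t → Bp f → 0 < lap (N r t) f
  eq_conv : ∀ r s t, r ≤ s → s ≤ t → N r t = conv ((N r s).bind (Q s t ·)) (N s t)

/-- `μ` gives `(a, b]`, `b < t`, the mass `J_{a+,t}(f) - J_{b+,t}(f)`. -/
def HasJfunIncrements (N : ℝ → ℝ → Measure (FiniteMeasure E)) (t : ℝ) (f : E → ℝ)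
    (μ : Measure ℝ) : Prop :=
  ∀ a b, a ≤ b → b < t →
    μ (Ioc a b) = ENNReal.ofReal ((⨆ w : Ioc a t, Jfun N w t f) - ⨆ w : Ioc b t, Jfun N w t f)

namespace IsSkewConvolutionSemigroup

variable {Q : ℝ → ℝ → Kernel (FiniteMeasure E) (FiniteMeasure E)}
  {V : ℝ → ℝ → (E → ℝ) → E → ℝ} {N : ℝ → ℝ → Measure (FiniteMeasure E)}
  {r t u v a b c : ℝ} {f g : E → ℝ} {μ ν : Measure ℝ} {A : Set ℝ}

lemma lap_mul (hS : IsSkewConvolutionSemigroup Q V N) (huv : u ≤ v) (hvt : v ≤ t) (hf : Bp f) :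
    lap (N u t) f = lap (N u v) (V v t f) * lap (N v t) f := by
  have := hS.isProbabilityMeasure u v huv
  have := hS.isProbabilityMeasure v t hvt
  have := hS.isMarkovKernel v t hvt
  have hpos := hS.lap_pos u t f (huv.trans hvt) hf
  rw [hS.eq_conv u v t huv hvt] at hpos ⊢
  have hconv := lap_conv hf hpos.ne'
  rw [hconv] at hpos ⊢
  rw [lap_bind hf (hS.lap_kernel v t hvt · f hf) (left_ne_zero_of_mul hpos.ne')]

lemma Jfun_eq_add (hS : IsSkewConvolutionSemigroup Q V N) (huv : u ≤ v) (hvt : v ≤ t)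
    (hf : Bp f) : Jfun N u t f = Jfun N u v (V v t f) + Jfun N v t f := by
  rw [Jfun, hS.lap_mul huv hvt hf, Real.log_mul
    (hS.lap_pos u v _ huv (hS.bp_cumulant v t f hvt hf)).ne' (hS.lap_pos v t f hvt hf).ne', Jfun,
    Jfun]
  ring

lemma Jfun_nonneg (hS : IsSkewConvolutionSemigroup Q V N) (hrt : r ≤ t) (hf : Bp f) :
    0 ≤ Jfun N r t f :=
  have := hS.isProbabilityMeasure r t hrt
  neg_log_lap_nonneg _ hf

lemma antitoneOn_Jfun (hS : IsSkewConvolutionSemigroup Q V N) (hf : Bp f) :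
    AntitoneOn (fun r => Jfun N r t f) (Iic t) := fun u _ v hv huv => by
  dsimp only
  rw [hS.Jfun_eq_add huv hv hf]
  linarith [hS.Jfun_nonneg huv (hS.bp_cumulant v t f hv hf)]

lemma Jfun_le_mul (hS : IsSkewConvolutionSemigroup Q V N) (hrt : r ≤ t) (hf : Bp f) (hg : Bp g)
    (hc : 1 ≤ c) (hle : ∀ x, g x ≤ c * f x) : Jfun N r t g ≤ c * Jfun N r t f :=
  have := hS.isProbabilityMeasure r t hrt
  neg_log_lap_le_mul hf hg hc hle (hS.lap_pos r t f hrt hf) (hS.lap_pos r t g hrt hg)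

/-- Apply `neg_log_lap_le_mul` to `Q_{r,t}(δ_x, ·)`, whose `-log` Laplace functional is
`V_{r,t} f x`. -/
lemma cumulant_le_mul (hS : IsSkewConvolutionSemigroup Q V N) (hrt : r ≤ t) (hf : Bp f)
    (hg : Bp g) (hc : 1 ≤ c) (hle : ∀ x, g x ≤ c * f x) (x : E) : V r t g x ≤ c * V r t f x := by
  have := hS.isMarkovKernel r t hrt
  let δ : FiniteMeasure E := ⟨Measure.dirac x, inferInstance⟩
  have hδ : ∀ φ, Bp φ → -Real.log (lap (Q r t δ) φ) = V r t φ x := fun φ hφ => by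
    rw [hS.lap_kernel r t hrt δ φ hφ, Real.log_exp, neg_neg]
    exact integral_dirac' _ x (hS.bp_cumulant r t φ hrt hφ).1.stronglyMeasurable
  have hpos : ∀ φ, Bp φ → 0 < lap (Q r t δ) φ := fun φ hφ => by
    rw [hS.lap_kernel r t hrt δ φ hφ]
    exact Real.exp_pos _
  rw [← hδ f hf, ← hδ g hg]
  exact neg_log_lap_le_mul hf hg hc hle (hpos f hf) (hpos g hg)

lemma Jfun_sub_le_mul (hS : IsSkewConvolutionSemigroup Q V N) (huv : u ≤ v) (hvt : v ≤ t)
    (hf : Bp f) (hg : Bp g) (hc : 1 ≤ c) (hle : ∀ x, g x ≤ c * f x) :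
    Jfun N u t g - Jfun N v t g ≤ c * (Jfun N u t f - Jfun N v t f) := by
  rw [hS.Jfun_eq_add huv hvt hg, hS.Jfun_eq_add huv hvt hf, add_sub_cancel_right,
    add_sub_cancel_right]
  exact hS.Jfun_le_mul huv (hS.bp_cumulant v t f hvt hf) (hS.bp_cumulant v t g hvt hg) hc
    (hS.cumulant_le_mul hvt hf hg hc hle)

lemma ciSup_Jfun_sub_le_mul (hS : IsSkewConvolutionSemigroup Q V N) (hf : Bp f) (hg : Bp g)
    (hc : 1 ≤ c) (hle : ∀ x, g x ≤ c * f x) (hab : a ≤ b) (hbt : b < t) :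
    (⨆ w : Ioc a t, Jfun N w t g) - (⨆ w : Ioc b t, Jfun N w t g)
      ≤ c * ((⨆ w : Ioc a t, Jfun N w t f) - ⨆ w : Ioc b t, Jfun N w t f) :=
  ciSup_Ioc_sub_le_mul (hS.antitoneOn_Jfun hg) (hS.antitoneOn_Jfun hf) (zero_le_one.trans hc)
    (fun _ _ huv hvt => hS.Jfun_sub_le_mul huv hvt hf hg hc hle) hab hbt

lemma ciInf_Jfun_le_mul (hS : IsSkewConvolutionSemigroup Q V N) (hf : Bp f) (hg : Bp g)
    (hc : 1 ≤ c) (hle : ∀ x, g x ≤ c * f x) :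
    ⨅ r : Iio t, Jfun N r t g ≤ c * ⨅ r : Iio t, Jfun N r t f := by
  rw [Real.mul_iInf_of_nonneg (zero_le_one.trans hc)]
  exact ciInf_mono ⟨0, forall_mem_range.2 fun r => hS.Jfun_nonneg r.2.le hg⟩
    fun r => hS.Jfun_le_mul r.2.le hf hg hc hle

lemma ciSup_Jfun_Ioc_eq (hS : IsSkewConvolutionSemigroup Q V N) (hrt : r < t) (htu : t ≤ u)
    (hf : Bp f) :
    ⨆ w : Ioc r u, Jfun N w u f = (⨆ w : Ioc r t, Jfun N w t (V t u f)) + Jfun N t u f := by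
  have := nonempty_Ioc_subtype hrt
  rw [(hS.antitoneOn_Jfun hf).ciSup_Ioc_eq hrt htu,
    ciSup_add ((hS.antitoneOn_Jfun (hS.bp_cumulant t u f htu hf)).bddAbove_range_Ioc r)]
  exact iSup_congr fun w => hS.Jfun_eq_add w.2.2 htu hf

lemma measure_le_mul (hS : IsSkewConvolutionSemigroup Q V N) (hf : Bp f) (hg : Bp g)
    (hc : 1 ≤ c) (hle : ∀ x, g x ≤ c * f x) [IsLocallyFiniteMeasure μ]
    [IsLocallyFiniteMeasure ν] (hμ : HasJfunIncrements N t g μ) (hν : HasJfunIncrements N t f ν)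
    (hμt : μ {t} = ENNReal.ofReal (⨅ r : Iio t, Jfun N r t g))
    (hνt : ν {t} = ENNReal.ofReal (⨅ r : Iio t, Jfun N r t f)) (hAt : A ⊆ Iic t) :
    μ A ≤ ENNReal.ofReal c * ν A := by
  have hc0 : 0 ≤ c := zero_le_one.trans hc
  have hsmul : ∀ s, (c.toNNReal • ν) s = ENNReal.ofReal c * ν s := fun _ => rfl
  have key : μ.restrict (Iic t) ≤ (c.toNNReal • ν).restrict (Iic t) := by
    refine Measure.restrict_Iic_le_of_forall_Ioc_le (fun a b hab hbt => ?_) ?_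
    · rw [hsmul, hμ a b hab hbt, hν a b hab hbt, ← ENNReal.ofReal_mul hc0]
      exact ENNReal.ofReal_le_ofReal (hS.ciSup_Jfun_sub_le_mul hf hg hc hle hab hbt)
    · rw [hsmul, hμt, hνt, ← ENNReal.ofReal_mul hc0]
      exact ENNReal.ofReal_le_ofReal (hS.ciInf_Jfun_le_mul hf hg hc hle)
  simpa only [Measure.restrict_eq_self _ hAt, hsmul] using key A

lemma measure_eq_of_cumulant (hS : IsSkewConvolutionSemigroup Q V N) (htu : t ≤ u) (hf : Bp f)
    [IsLocallyFiniteMeasure μ] [IsLocallyFiniteMeasure ν] (hμ : HasJfunIncrements N u f μ)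
    (hν : HasJfunIncrements N t (V t u f) ν) (hAt : A ⊆ Iio t) : μ A = ν A := by
  have key : μ.restrict (Iio t) = ν.restrict (Iio t) :=
    Measure.restrict_Iio_eq_of_forall_Ioc_eq fun a b hab hbt => by
      rw [hμ a b hab (hbt.trans_le htu), hν a b hab hbt,
        hS.ciSup_Jfun_Ioc_eq (hab.trans_lt hbt) htu hf, hS.ciSup_Jfun_Ioc_eq hbt htu hf,
        add_sub_add_right_eq_sub]
  rw [← Measure.restrict_eq_self _ hAt, key, Measure.restrict_eq_self _ hAt]

end IsSkewConvolutionSemigroup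

end SkewConvolution

theorem G_measure_properties_general
    (Q : ℝ → ℝ → Kernel (FiniteMeasure E) (FiniteMeasure E))
    (V : ℝ → ℝ → (E → ℝ) → E → ℝ)
    (hQmar : ∀ r t, r ≤ t → IsMarkovKernel (Q r t))
    (hVBp : ∀ r t f, r ≤ t → Bp f → Bp (V r t f))
    (hQlap : ∀ r t, r ≤ t → ∀ (μ : FiniteMeasure E) f, Bp f →
      lap ((Q r t) μ) f = Real.exp (- ∫ x, V r t f x ∂(μ : Measure E)))
    (N : ℝ → ℝ → Measure (FiniteMeasure E))
    (hN : ∀ r t, r ≤ t → IsProbabilityMeasure (N r t))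
    (hpos : ∀ r t f, r ≤ t → Bp f → 0 < lap (N r t) f)
    (hSCS : ∀ r s t, r ≤ s → s ≤ t → N r t = conv ((N r s).bind (Q s t ·)) (N s t))
    (G : ℝ → (E → ℝ) → Measure ℝ)
    (hGfin : ∀ t f, Bp f → IsFiniteMeasureOnCompacts (G t f))
    (hGioc : ∀ t f, Bp f → ∀ r s, r ≤ s → s < t →
      G t f (Set.Ioc r s)
        = ENNReal.ofReal
            ((⨆ u : (Set.Ioc r t : Set ℝ), Jfun N (u : ℝ) t f)
              - (⨆ v : (Set.Ioc s t : Set ℝ), Jfun N (v : ℝ) t f)))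
    (hGatom : ∀ t f, Bp f →
      G t f {t} = ENNReal.ofReal (⨅ r : (Set.Iio t : Set ℝ), Jfun N (r : ℝ) t f)) :
    (∀ (t : ℝ) (f g : E → ℝ) (c : ℝ), Bp f → Bp g → 1 ≤ c → (∀ x, g x ≤ c * f x) →
      ∀ A : Set ℝ, MeasurableSet A → A ⊆ Set.Iic t →
        G t g A ≤ ENNReal.ofReal c * G t f A) ∧
    (∀ (t u : ℝ) (f : E → ℝ), t ≤ u → Bp f →
      ∀ A : Set ℝ, MeasurableSet A → A ⊆ Set.Iio t → G u f A = G t (V t u f) A) ∧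
    (∀ (t u : ℝ) (f : E → ℝ), t ≤ u → Bp f →
      (G u f).restrict (Set.Iio t) ≪ (G t (fun _ => (1 : ℝ))).restrict (Set.Iio t)) := by
  have hS : IsSkewConvolutionSemigroup Q V N := ⟨hQmar, hVBp, hQlap, hN, hpos, hSCS⟩
  have domination : ∀ (t : ℝ) (f g : E → ℝ) (c : ℝ), Bp f → Bp g → 1 ≤ c →
      (∀ x, g x ≤ c * f x) → ∀ A : Set ℝ, MeasurableSet A → A ⊆ Iic t →
        G t g A ≤ ENNReal.ofReal c * G t f A := fun t f g c hf hg hc hle _ _ hAt =>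
    have := hGfin t f hf
    have := hGfin t g hg
    hS.measure_le_mul hf hg hc hle (hGioc t g hg) (hGioc t f hf) (hGatom t g hg) (hGatom t f hf)
      hAt
  have compatibility : ∀ (t u : ℝ) (f : E → ℝ), t ≤ u → Bp f →
      ∀ A : Set ℝ, MeasurableSet A → A ⊆ Iio t → G u f A = G t (V t u f) A :=
    fun t u f htu hf _ _ hAt =>
    have := hGfin u f hf
    have := hGfin t _ (hVBp t u f htu hf)
    hS.measure_eq_of_cumulant htu hf (hGioc u f hf) (hGioc t _ (hVBp t u f htu hf)) hAt
  refine ⟨domination, compatibility, fun t u f htu hf => .mk fun A hA hA0 => ?_⟩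
  obtain ⟨C, hC⟩ := (hVBp t u f htu hf).2.2
  have hAt : A ∩ Iio t ⊆ Iio t := inter_subset_right
  rw [Measure.restrict_apply hA] at hA0 ⊢
  rw [compatibility t u f htu hf _ (hA.inter measurableSet_Iio) hAt]
  refine le_zero_iff.1 ((domination t _ _ (max C 1) bp_one (hVBp t u f htu hf)
    (le_max_right C 1) (fun x => ?_) _ (hA.inter measurableSet_Iio)
    (hAt.trans Iio_subset_Iic_self)).trans_eq ?_)
  · simpa using (hC x).trans (le_max_left C 1)
  · rw [hA0, mul_zero]

/-- **Lemma 3.2.** Properties of the Radon measures `G_t(f,·)` on `(-∞,t]` induced by the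
non-increasing functions `r ↦ J_{r,t}(f)` of a skew convolution semigroup:
(i) domination, (ii) compatibility via the cumulant semigroup on `(-∞,t)`, and
(iii) absolute continuity with respect to `G_t(1,·)` on `(-∞,t)`. -/
theorem G_measure_properties
    (Q : ℝ → ℝ → Kernel (FiniteMeasure E) (FiniteMeasure E))
    (V : ℝ → ℝ → (E → ℝ) → E → ℝ)
    (hQmar : ∀ r t, r ≤ t → IsMarkovKernel (Q r t))
    (hQid : ∀ t, Q t t = Kernel.id)
    (hQsem : ∀ r s t, r ≤ s → s ≤ t → ∀ μ, (Q r t) μ = ((Q r s) μ).bind (Q s t ·))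
    (hVBp : ∀ r t f, r ≤ t → Bp f → Bp (V r t f))
    (hVsem : ∀ r s t f, r ≤ s → s ≤ t → Bp f → V r s (V s t f) = V r t f)
    (hQlap : ∀ r t, r ≤ t → ∀ (μ : FiniteMeasure E) f, Bp f →
      lap ((Q r t) μ) f = Real.exp (- ∫ x, V r t f x ∂(μ : Measure E)))
    (N : ℝ → ℝ → Measure (FiniteMeasure E))
    (hN : ∀ r t, r ≤ t → IsProbabilityMeasure (N r t))
    (hpos : ∀ r t f, r ≤ t → Bp f → 0 < lap (N r t) f)
    (hSCS : ∀ r s t, r ≤ s → s ≤ t → N r t = conv ((N r s).bind (Q s t ·)) (N s t))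
    (G : ℝ → (E → ℝ) → Measure ℝ)
    (hGfin : ∀ t f, Bp f → IsFiniteMeasureOnCompacts (G t f))
    (hGsupp : ∀ t f, Bp f → G t f (Set.Ioi t) = 0)
    (hGioc : ∀ t f, Bp f → ∀ r s, r ≤ s → s < t →
      G t f (Set.Ioc r s)
        = ENNReal.ofReal
            ((⨆ u : (Set.Ioc r t : Set ℝ), Jfun N (u : ℝ) t f)
              - (⨆ v : (Set.Ioc s t : Set ℝ), Jfun N (v : ℝ) t f)))
    (hGatom : ∀ t f, Bp f →
      G t f {t} = ENNReal.ofReal (⨅ r : (Set.Iio t : Set ℝ), Jfun N (r : ℝ) t f)) :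
    (∀ (t : ℝ) (f g : E → ℝ) (c : ℝ), Bp f → Bp g → 1 ≤ c → (∀ x, g x ≤ c * f x) →
      ∀ A : Set ℝ, MeasurableSet A → A ⊆ Set.Iic t →
        G t g A ≤ ENNReal.ofReal c * G t f A) ∧
    (∀ (t u : ℝ) (f : E → ℝ), t ≤ u → Bp f →
      ∀ A : Set ℝ, MeasurableSet A → A ⊆ Set.Iio t → G u f A = G t (V t u f) A) ∧
    (∀ (t u : ℝ) (f : E → ℝ), t ≤ u → Bp f →
      (G u f).restrict (Set.Iio t) ≪ (G t (fun _ => (1 : ℝ))).restrict (Set.Iio t)) :=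
  G_measure_properties_general Q V hQmar hVBp hQlap N hN hpos hSCS G hGfin hGioc hGatom

end
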